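/- Let G be a cubic graph, let H be a maximum 3-edge-colorable subgraph of G properly colored with colors {1,2,3}, and let e = (u,v) ∈ E(G) \ E(H). Suppose C(u) ∩ C(v) = {α}, C(u) = {α, β}, and C(v) = {α, γ}, where C(w) denotes the set of colors appearing on the edges of H incident to the vertex w. Then there exists an odd cycle C_e in G containing the edge e such that all edges of C_e other than e are colored alternately β and γ, and every edge of G incident to a vertex of C_e but not lying on C_e is colored α. -/
import Mathlib


/-- A multigraph on vertex type `V` with edge type `E`: each edge has a pair of
endpoints (an element of `Sym2 V`), and there are no loops.  Multiple edges
(distinct edges with the same endpoints) are allowed. -/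
structure Multigraph (V : Type) (E : Type) where
  ends : E → Sym2 V
  no_loops : ∀ e : E, ¬ (ends e).IsDiag

namespace Multigraph

variable {V E : Type}

/-- The degree of a vertex `v` inside the set `S` of edges:
the number of edges of `S` incident to `v`. -/
noncomputable def degreeIn (G : Multigraph V E) (S : Set E) (v : V) : ℕ :=
  {e ∈ S | v ∈ G.ends e}.ncard

/-- The degree of a vertex: the number of edges incident to it. -/
noncomputable def degree (G : Multigraph V E) (v : V) : ℕ :=
  G.degreeIn Set.univ v

/-- A cubic graph: every vertex has degree exactly `3`. -/
def IsCubic (G : Multigraph V E) : Prop :=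
  ∀ v : V, G.degree v = 3

/-- Two edges are adjacent if they share an endpoint. -/
def EdgeAdj (G : Multigraph V E) (e f : E) : Prop :=
  ∃ v : V, v ∈ G.ends e ∧ v ∈ G.ends f

/-- A set of edges is a matching if no two distinct edges of it share an endpoint. -/
def IsMatching (G : Multigraph V E) (M : Set E) : Prop :=
  ∀ e ∈ M, ∀ f ∈ M, e ≠ f → ¬ G.EdgeAdj e f

/-- A perfect matching (`1`-factor): a matching covering every vertex. -/
def IsPerfectMatching (G : Multigraph V E) (F : Set E) : Prop :=
  G.IsMatching F ∧ ∀ v : V, ∃ e ∈ F, v ∈ G.ends e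

/-- A `2`-factor: a spanning subgraph in which every vertex has degree exactly `2`. -/
def Is2Factor (G : Multigraph V E) (F : Set E) : Prop :=
  ∀ v : V, G.degreeIn F v = 2

/-- `c` is a proper edge coloring of the (spanning) subgraph with edge set `S`:
distinct adjacent edges of `S` get distinct colors. -/
def IsProperColoring (G : Multigraph V E) (S : Set E) {k : ℕ} (c : E → Fin k) : Prop :=
  ∀ e ∈ S, ∀ f ∈ S, e ≠ f → G.EdgeAdj e f → c e ≠ c f

/-- The (spanning) subgraph with edge set `S` is `k`-edge-colorable. -/
def Colorable (G : Multigraph V E) (k : ℕ) (S : Set E) : Prop :=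
  ∃ c : E → Fin k, G.IsProperColoring S c

/-- `H` is (the edge set of) a maximum `k`-edge-colorable subgraph of `G`. -/
def IsMaxColorable (G : Multigraph V E) (k : ℕ) (H : Set E) : Prop :=
  G.Colorable k H ∧ ∀ S : Set E, G.Colorable k S → S.ncard ≤ H.ncard

/-- `ν_k(G)`: the number of edges of a maximum `k`-edge-colorable subgraph of `G`. -/
noncomputable def nu (G : Multigraph V E) (k : ℕ) : ℕ :=
  sSup {n : ℕ | ∃ S : Set E, G.Colorable k S ∧ S.ncard = n}

/-- The set of colors appearing (under the coloring `c` of the subgraph `H`)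
on the edges of `H` incident to the vertex `w`. -/
def colorsAt (G : Multigraph V E) (H : Set E) {k : ℕ} (c : E → Fin k) (w : V) :
    Set (Fin k) :=
  {γ : Fin k | ∃ f ∈ H, w ∈ G.ends f ∧ c f = γ}

end Multigraph

section AltHelpers
variable {V E : Type}

/-- color of the k-th walk edge -/
def colfn (β γ : Fin 3) (k : ℕ) : Fin 3 := if k % 2 = 1 then β else γ

lemma colfn_cases (β γ : Fin 3) (k : ℕ) : colfn β γ k = β ∨ colfn β γ k = γ := by
  unfold colfn; split <;> simp

lemma colfn_eq_of_parity (β γ : Fin 3) {k l : ℕ} (h : k % 2 = l % 2) :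
    colfn β γ k = colfn β γ l := by
  unfold colfn; rw [h]

lemma colfn_succ_ne (β γ : Fin 3) (hβγ : β ≠ γ) (k : ℕ) :
    colfn β γ k ≠ colfn β γ (k+1) := by
  unfold colfn
  rcases Nat.even_or_odd k with h | h
  · have h1 : k % 2 = 0 := Nat.even_iff.mp h
    have h2 : (k+1) % 2 = 1 := by omega
    simp [h1, h2]; exact hβγ.symm
  · have h1 : k % 2 = 1 := Nat.odd_iff.mp h
    have h2 : (k+1) % 2 = 0 := by omega
    simp [h1, h2]; exact hβγ

lemma colfn_parity_ne {β γ : Fin 3} (hβγ : β ≠ γ) {k l : ℕ} (h : colfn β γ k = colfn β γ l) :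
    k % 2 = l % 2 := by
  by_contra hne
  unfold colfn at h
  have hk := Nat.mod_two_eq_zero_or_one k
  have hl := Nat.mod_two_eq_zero_or_one l
  rcases hk with hk | hk <;> rcases hl with hl | hl <;> simp [hk, hl] at h hne <;> tauto

/-- the color swap -/
def sw (β γ δ : Fin 3) : Fin 3 := if δ = β then γ else if δ = γ then β else δ

lemma sw_invol : ∀ β γ δ : Fin 3, sw β γ (sw β γ δ) = δ := by decide

lemma sw_inj {β γ a b : Fin 3} (h : sw β γ a = sw β γ b) : a = b := by
  calc a = sw β γ (sw β γ a) := (sw_invol β γ a).symm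
    _ = sw β γ (sw β γ b) := by rw [h]
    _ = b := sw_invol β γ b

lemma sw_beta : ∀ β γ : Fin 3, sw β γ β = γ := by decide
lemma sw_gamma : ∀ β γ : Fin 3, sw β γ γ = β := by decide

lemma sw_colfn (β γ : Fin 3) (k : ℕ) : sw β γ (colfn β γ k) = colfn β γ (k+1) := by
  unfold colfn
  rcases Nat.mod_two_eq_zero_or_one k with h | h
  · have h2 : (k+1) % 2 = 1 := by omega
    simp [h, h2, sw_gamma]
  · have h2 : (k+1) % 2 = 0 := by omega
    simp [h, h2, sw_beta]

lemma sw_ne_alpha' : ∀ α β γ δ : Fin 3, α ≠ β → α ≠ γ → (δ = β ∨ δ = γ) →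
    sw β γ δ ≠ α := by decide

lemma sw_ne_alpha {α β γ δ : Fin 3} (h1 : α ≠ β) (h2 : α ≠ γ) (h3 : δ = β ∨ δ = γ) :
    sw β γ δ ≠ α := sw_ne_alpha' α β γ δ h1 h2 h3

lemma colfn_ne_alpha {α β γ : Fin 3} (hαβ : α ≠ β) (hαγ : α ≠ γ) (k : ℕ) :
    colfn β γ k ≠ α := by
  rcases colfn_cases β γ k with h | h <;> rw [h] <;> [exact hαβ.symm; exact hαγ.symm]

lemma fin3_eq_of_ne {α β γ δ : Fin 3} (h1 : α ≠ β) (h2 : α ≠ γ) (h3 : β ≠ γ)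
    (h4 : δ ≠ β) (h5 : δ ≠ γ) : δ = α := by
  simp only [Fin.ext_iff] at *; omega



lemma unique_color (G : Multigraph V E) (H : Set E) {k : ℕ} (c : E → Fin k)
    (hc : G.IsProperColoring H c) {g h : E} (hg : g ∈ H) (hh : h ∈ H) (z : V)
    (hzg : z ∈ G.ends g) (hzh : z ∈ G.ends h) (hcc : c g = c h) : g = h := by
  by_contra hne
  exact hc g hg h hh hne ⟨z, hzg, hzh⟩ hcc

lemma walk_inj (G : Multigraph V E) (H : Set E) (c : E → Fin 3) (β γ : Fin 3) (hβγ : β ≠ γ)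
    (hc : G.IsProperColoring H c) (m : ℕ) (x : ℕ → V) (ed : ℕ → E)
    (hpath : ∀ k, 1 ≤ k → k ≤ m →
      ed k ∈ H ∧ G.ends (ed k) = s(x (k-1), x k) ∧ c (ed k) = colfn β γ k)
    (hstart : ∀ h ∈ H, x 0 ∈ G.ends h → c h ≠ colfn β γ 0) :
    ∀ b, b ≤ m → ∀ a, a < b → x a ≠ x b := by
  intro b
  induction b using Nat.strong_induction_on with
  | _ b IH =>
  intro hbm a hab heq
  obtain ⟨hbH, hbe, hbc⟩ := hpath b (by omega) hbm
  have hxb_mem : x b ∈ G.ends (ed b) := by rw [hbe]; exact Sym2.mem_mk_right _ _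
  have hxa_mem : x a ∈ G.ends (ed b) := heq ▸ hxb_mem
  have hcover : c (ed b) = colfn β γ a ∨ c (ed b) = colfn β γ (a+1) := by
    have : b % 2 = a % 2 ∨ b % 2 = (a+1) % 2 := by omega
    rcases this with h | h
    · exact Or.inl (by rw [hbc]; exact colfn_eq_of_parity β γ h)
    · exact Or.inr (by rw [hbc]; exact colfn_eq_of_parity β γ h)
  rcases hcover with hca | hca
  · rcases Nat.eq_zero_or_pos a with rfl | ha
    · exact hstart (ed b) hbH hxa_mem hca
    · obtain ⟨haH, hae, hac⟩ := hpath a (by omega) (by omega)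
      have hxa_mem_a : x a ∈ G.ends (ed a) := by rw [hae]; exact Sym2.mem_mk_right _ _
      have hedeq : ed b = ed a :=
        unique_color G H c hc hbH haH (x a) hxa_mem hxa_mem_a (by rw [hca, hac])
      have hends2 : s(x (b-1), x b) = s(x (a-1), x a) := by rw [← hbe, hedeq, hae]
      have hpar : b % 2 = a % 2 := colfn_parity_ne hβγ (by rw [← hbc, hca])
      rw [Sym2.eq_iff] at hends2
      rcases hends2 with ⟨h1, _⟩ | ⟨h1, h2⟩
      · exact IH (b-1) (by omega) (by omega) (a-1) (by omega) h1.symm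
      · exact IH a hab (by omega) (a-1) (by omega) (by rw [← h2, ← heq])
  · have ha1m : a + 1 ≤ m := by omega
    obtain ⟨haH, hae, hac⟩ := hpath (a+1) (by omega) ha1m
    have ha1 : a + 1 - 1 = a := by omega
    rw [ha1] at hae
    have hxa_mem_a : x a ∈ G.ends (ed (a+1)) := by rw [hae]; exact Sym2.mem_mk_left _ _
    have hedeq : ed b = ed (a+1) :=
      unique_color G H c hc hbH haH (x a) hxa_mem hxa_mem_a (by rw [hca, hac])
    by_cases hb1 : b = a + 1
    · subst hb1
      have := G.no_loops (ed (a+1))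
      rw [hae, Sym2.mk_isDiag_iff] at this
      exact this heq
    · have hpar : b % 2 = (a+1) % 2 := colfn_parity_ne hβγ (by rw [← hbc, hca])
      have hb3 : a + 3 ≤ b := by omega
      have hends2 : s(x (b-1), x b) = s(x a, x (a+1)) := by rw [← hbe, hedeq, hae]
      rw [Sym2.eq_iff] at hends2
      rcases hends2 with ⟨h1, _⟩ | ⟨h1, _⟩
      · exact IH (b-1) (by omega) (by omega) a (by omega) h1.symm
      · exact IH (b-1) (by omega) (by omega) (a+1) (by omega) h1.symm



lemma colfn_pair (β γ : Fin 3) (k : ℕ) :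
    (colfn β γ k = β ∧ colfn β γ (k+1) = γ) ∨ (colfn β γ k = γ ∧ colfn β γ (k+1) = β) := by
  unfold colfn
  rcases Nat.mod_two_eq_zero_or_one k with h | h
  · right
    have h2 : (k+1) % 2 = 1 := by omega
    rw [h, h2]; norm_num
  · left
    have h2 : (k+1) % 2 = 0 := by omega
    rw [h, h2]; norm_num

lemma walk_KL (G : Multigraph V E) (H : Set E) (c : E → Fin 3) (β γ : Fin 3)
    (hc : G.IsProperColoring H c) (m : ℕ) (x : ℕ → V) (ed : ℕ → E)
    (hpath : ∀ k, 1 ≤ k → k ≤ m →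
      ed k ∈ H ∧ G.ends (ed k) = s(x (k-1), x k) ∧ c (ed k) = colfn β γ k)
    (hstart : ∀ h ∈ H, x 0 ∈ G.ends h → c h ≠ colfn β γ 0)
    (hterm : ∀ g ∈ H, x m ∈ G.ends g → c g ≠ colfn β γ (m+1)) :
    ∀ j, j ≤ m → ∀ h ∈ H, x j ∈ G.ends h → (c h = β ∨ c h = γ) →
      (1 ≤ j ∧ h = ed j) ∨ (j + 1 ≤ m ∧ h = ed (j+1)) := by
  intro j hjm h hH hmem hbc
  have hcover : c h = colfn β γ j ∨ c h = colfn β γ (j+1) := by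
    rcases colfn_pair β γ j with ⟨h1, h2⟩ | ⟨h1, h2⟩ <;> rcases hbc with h3 | h3 <;>
      simp [h1, h2, h3]
  rcases hcover with hcj | hcj
  · rcases Nat.eq_zero_or_pos j with rfl | hj1
    · exact absurd hcj (hstart h hH hmem)
    · obtain ⟨hjH, hje, hjc⟩ := hpath j hj1 hjm
      have hxj : x j ∈ G.ends (ed j) := by rw [hje]; exact Sym2.mem_mk_right _ _
      exact Or.inl ⟨hj1, unique_color G H c hc hH hjH (x j) hmem hxj (by rw [hcj, hjc])⟩
  · by_cases hj1m : j + 1 ≤ m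
    · obtain ⟨hjH, hje, hjc⟩ := hpath (j+1) (by omega) hj1m
      have ha1 : j + 1 - 1 = j := by omega
      rw [ha1] at hje
      have hxj : x j ∈ G.ends (ed (j+1)) := by rw [hje]; exact Sym2.mem_mk_left _ _
      exact Or.inr ⟨hj1m, unique_color G H c hc hH hjH (x j) hmem hxj (by rw [hcj, hjc])⟩
    · have hjm' : j = m := by omega
      subst hjm'
      exact absurd hcj (hterm h hH hmem)

lemma walk_ed_inj (G : Multigraph V E) (H : Set E) (c : E → Fin 3) (β γ : Fin 3)
    (m : ℕ) (x : ℕ → V) (ed : ℕ → E)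
    (hpath : ∀ k, 1 ≤ k → k ≤ m →
      ed k ∈ H ∧ G.ends (ed k) = s(x (k-1), x k) ∧ c (ed k) = colfn β γ k)
    (hinj : ∀ a b, a ≤ m → b ≤ m → x a = x b → a = b) :
    ∀ a b, 1 ≤ a → a ≤ m → 1 ≤ b → b ≤ m → ed a = ed b → a = b := by
  intro a b ha1 ham hb1 hbm heq
  obtain ⟨_, hae, _⟩ := hpath a ha1 ham
  obtain ⟨_, hbe, _⟩ := hpath b hb1 hbm
  have : s(x (a-1), x a) = s(x (b-1), x b) := by rw [← hae, heq, hbe]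
  rw [Sym2.eq_iff] at this
  rcases this with ⟨_, h2⟩ | ⟨h1, h2⟩
  · exact hinj a b ham hbm h2
  · have e1 : a - 1 = b := hinj (a-1) b (by omega) hbm h1
    have e2 : a = b - 1 := hinj a (b-1) ham (by omega) h2
    omega

lemma kempe1 {V E : Type} [Fintype E] (G : Multigraph V E) (H : Set E)
    (hmax : ∀ S : Set E, G.Colorable 3 S → S.ncard ≤ H.ncard)
    (c : E → Fin 3) (hc : G.IsProperColoring H c)
    (β γ : Fin 3) (hβγ : β ≠ γ)
    (e : E) (he : e ∉ H) (v : V)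
    (m : ℕ) (x : ℕ → V) (ed : ℕ → E)
    (hpath : ∀ k, 1 ≤ k → k ≤ m →
      ed k ∈ H ∧ G.ends (ed k) = s(x (k-1), x k) ∧ c (ed k) = colfn β γ k)
    (hstart : ∀ h ∈ H, x 0 ∈ G.ends h → c h ≠ colfn β γ 0)
    (hterm : ∀ g ∈ H, x m ∈ G.ends g → c g ≠ colfn β γ (m+1))
    (hinj : ∀ a b, a ≤ m → b ≤ m → x a = x b → a = b)
    (hendse : G.ends e = s(x 0, v))
    (hβv : ∀ h ∈ H, v ∈ G.ends h → c h ≠ β)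
    (hm : 1 ≤ m)
    (hv0 : x 0 ≠ v) (hvm : x m ≠ v) : False := by
  classical
  have KL := walk_KL G H c β γ hc m x ed hpath hstart hterm
  have hvnot : ∀ l, l ≤ m → x l ≠ v := by
    intro l hl hxv
    rcases Nat.eq_zero_or_pos l with rfl | hl1
    · exact hv0 hxv
    · rcases eq_or_lt_of_le hl with rfl | hlm
      · exact hvm hxv
      · obtain ⟨hlH, hle, hlc⟩ := hpath l hl1 hl
        obtain ⟨hl1H, hl1e, hl1c⟩ := hpath (l+1) (by omega) (by omega)
        have ha1 : l + 1 - 1 = l := by omega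
        rw [ha1] at hl1e
        rcases colfn_pair β γ l with ⟨h1, _⟩ | ⟨_, h2⟩
        · refine hβv (ed l) hlH ?_ (by rw [hlc, h1])
          rw [hle, ← hxv]; exact Sym2.mem_mk_right _ _
        · refine hβv (ed (l+1)) hl1H ?_ (by rw [hl1c, h2])
          rw [hl1e, ← hxv]; exact Sym2.mem_mk_left _ _
  have hvedge : ∀ k, 1 ≤ k → k ≤ m → v ∉ G.ends (ed k) := by
    intro k h1 h2 hmem
    obtain ⟨_, hke, _⟩ := hpath k h1 h2
    rw [hke] at hmem
    rcases Sym2.mem_iff.mp hmem with h | h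
    · exact hvnot (k-1) (by omega) h.symm
    · exact hvnot k h2 h.symm
  set W : E → Prop := fun g => ∃ k, 1 ≤ k ∧ k ≤ m ∧ g = ed k with hW_def
  set c' : E → Fin 3 := fun g => if g = e then β else if W g then sw β γ (c g) else c g
    with hc'_def
  have hWne : ∀ {g}, W g → g ≠ e := by
    rintro g ⟨k, h1, h2, rfl⟩ hEq
    exact he (hEq ▸ (hpath k h1 h2).1)
  have hcW : ∀ g, W g → c' g = sw β γ (c g) := by
    intro g hW
    rw [hc'_def]
    simp only [if_neg (hWne hW), if_pos hW]
  have hcNW : ∀ g, g ≠ e → ¬ W g → c' g = c g := by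
    intro g h1 h2
    rw [hc'_def]
    simp only [if_neg h1, if_neg h2]
  have hce : c' e = β := by rw [hc'_def]; simp
  have keyA : ∀ h ∈ H, ∀ z : V, z ∈ G.ends h → z ∈ G.ends e → c' h ≠ β := by
    intro h hH z hzh hze
    have hh_ne : h ≠ e := fun hEq => he (hEq ▸ hH)
    rw [hendse] at hze
    rcases Sym2.mem_iff.mp hze with rfl | rfl
    · by_cases hWh : W h
      · obtain ⟨k, hk1, hkm, rfl⟩ := hWh
        obtain ⟨_, hke, hkc⟩ := hpath k hk1 hkm
        have hzh' := hzh
        rw [hke] at hzh'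
        rcases Sym2.mem_iff.mp hzh' with h0 | h0
        · have hk : k = 1 := by
            have := hinj 0 (k-1) (by omega) (by omega) h0
            omega
          rw [hcW _ ⟨k, hk1, hkm, rfl⟩, hkc, hk, sw_colfn]
          have h2 : colfn β γ 2 = γ := by unfold colfn; norm_num
          rw [h2]; exact hβγ.symm
        · have := hinj 0 k (by omega) hkm h0
          omega
      · rw [hcNW h hh_ne hWh]
        intro hchβ
        rcases KL 0 (by omega) h hH hzh (Or.inl hchβ) with ⟨h1, _⟩ | ⟨h1, h2⟩
        · omega
        · exact hWh ⟨1, le_refl 1, h1, h2⟩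
    · have hWh : ¬ W h := by
        rintro ⟨k, hk1, hkm, rfl⟩
        exact hvedge k hk1 hkm hzh
      rw [hcNW h hh_ne hWh]
      exact hβv h hH hzh
  have keyB : ∀ g ∈ H, ∀ h ∈ H, W g → ¬ W h → ∀ z : V, z ∈ G.ends g → z ∈ G.ends h →
      c' g ≠ c' h := by
    intro g hgH h hhH hWg hWh z hzg hzh
    have hh_ne : h ≠ e := fun hEq => he (hEq ▸ hhH)
    obtain ⟨k, hk1, hkm, rfl⟩ := hWg
    obtain ⟨_, hke, hkc⟩ := hpath k hk1 hkm
    rw [hcW _ ⟨k, hk1, hkm, rfl⟩, hcNW h hh_ne hWh]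
    have hzwalk : ∃ j, j ≤ m ∧ z = x j := by
      rw [hke] at hzg
      rcases Sym2.mem_iff.mp hzg with h0 | h0
      · exact ⟨k-1, by omega, h0⟩
      · exact ⟨k, hkm, h0⟩
    obtain ⟨j, hjm, rfl⟩ := hzwalk
    have hch : ¬ (c h = β ∨ c h = γ) := by
      intro hbc2
      rcases KL j hjm h hhH hzh hbc2 with ⟨h1, h2⟩ | ⟨h1, h2⟩
      · exact hWh ⟨j, h1, hjm, h2⟩
      · exact hWh ⟨j+1, by omega, h1, h2⟩
    rw [hkc]
    intro hEq
    apply hch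
    rw [← hEq, sw_colfn]
    exact colfn_cases β γ (k+1)
  have hproper : G.IsProperColoring (insert e H) c' := by
    intro g hg h hh hgh hadj
    obtain ⟨z, hzg, hzh⟩ := hadj
    rcases hg with rfl | hgH
    · rcases hh with rfl | hhH
      · exact absurd rfl hgh
      · rw [hce]; exact fun hEq => keyA h hhH z hzh hzg hEq.symm
    · rcases hh with rfl | hhH
      · rw [hce]; exact keyA g hgH z hzg hzh
      · by_cases hWg : W g <;> by_cases hWh : W h
        · rw [hcW g hWg, hcW h hWh]
          exact fun hEq => hc g hgH h hhH hgh ⟨z, hzg, hzh⟩ (sw_inj hEq)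
        · exact keyB g hgH h hhH hWg hWh z hzg hzh
        · exact fun hEq => keyB h hhH g hgH hWh hWg z hzh hzg hEq.symm
        · have h1 : g ≠ e := fun hEq => he (hEq ▸ hgH)
          have h2 : h ≠ e := fun hEq => he (hEq ▸ hhH)
          rw [hcNW g h1 hWg, hcNW h h2 hWh]
          exact hc g hgH h hhH hgh ⟨z, hzg, hzh⟩
  have hle := hmax _ ⟨c', hproper⟩
  rw [Set.ncard_insert_of_notMem he] at hle
  omega



lemma kempe2 {V E : Type} [Fintype E] (G : Multigraph V E) (H : Set E)
    (hmax : ∀ S : Set E, G.Colorable 3 S → S.ncard ≤ H.ncard)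
    (c : E → Fin 3) (hc : G.IsProperColoring H c)
    (α β γ : Fin 3) (hαβ : α ≠ β) (hαγ : α ≠ γ) (hβγ : β ≠ γ)
    (e t eu ev : E) (he : e ∉ H) (ht : t ∉ H)
    (m : ℕ) (x : ℕ → V) (ed : ℕ → E) (hm2 : 2 ≤ m) (hmev : m % 2 = 0)
    (hpath : ∀ k, 1 ≤ k → k ≤ m →
      ed k ∈ H ∧ G.ends (ed k) = s(x (k-1), x k) ∧ c (ed k) = colfn β γ k)
    (hstart : ∀ h ∈ H, x 0 ∈ G.ends h → c h ≠ colfn β γ 0)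
    (hterm : ∀ g ∈ H, x m ∈ G.ends g → c g ≠ colfn β γ (m+1))
    (hinj : ∀ a b, a ≤ m → b ≤ m → x a = x b → a = b)
    (hendse : G.ends e = s(x 0, x m))
    (j : ℕ) (y : V) (hj1 : 1 ≤ j) (hjm : j < m)
    (hendst : G.ends t = s(x j, y))
    (hynot : ∀ l, l ≤ m → y ≠ x l)
    (hu3 : ∀ g, x 0 ∈ G.ends g → g = e ∨ g = ed 1 ∨ g = eu)
    (heuH : eu ∈ H) (heuc : c eu = α)
    (hv3 : ∀ g, x m ∈ G.ends g → g = e ∨ g = ed m ∨ g = ev)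
    (hevH : ev ∈ H) (hevc : c ev = α)
    (hxj3 : ∀ g, x j ∈ G.ends g → g = ed j ∨ g = ed (j+1) ∨ g = t)
    (hδ : ∀ h ∈ H, y ∈ G.ends h → c h ≠ colfn β γ j) : False := by
  classical
  have KL := walk_KL G H c β γ hc m x ed hpath hstart hterm
  have edinj := walk_ed_inj G H c β γ m x ed hpath hinj
  have hcol1 : colfn β γ 1 = β := by unfold colfn; norm_num
  have hcol2 : colfn β γ 2 = γ := by unfold colfn; norm_num
  have hcolm : colfn β γ m = γ := by unfold colfn; rw [hmev]; norm_num
  obtain ⟨hjH, hje, hjc⟩ := hpath j hj1 (le_of_lt hjm)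
  obtain ⟨hj1H, hj1e, hj1c⟩ := hpath (j+1) (by omega) (by omega)
  have hyedge : ∀ k, 1 ≤ k → k ≤ m → y ∉ G.ends (ed k) := by
    intro k h1 h2 hmem
    obtain ⟨_, hke, _⟩ := hpath k h1 h2
    rw [hke] at hmem
    rcases Sym2.mem_iff.mp hmem with h | h
    · exact hynot (k-1) (by omega) h
    · exact hynot k h2 h
  have hxjt : x j ∈ G.ends t := by rw [hendst]; exact Sym2.mem_mk_left _ _
  have hte : t ≠ e := by
    intro hEq
    have : x j ∈ G.ends e := hEq ▸ hxjt
    rw [hendse] at this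
    rcases Sym2.mem_iff.mp this with h | h
    · have := hinj j 0 (by omega) (by omega) h; omega
    · have := hinj j m (by omega) (by omega) h; omega
  set W2 : E → Prop := fun g => ∃ k, 1 ≤ k ∧ k + 1 ≤ j ∧ g = ed k with hW2_def
  set c' : E → Fin 3 := fun g => if g = e then β else if g = t then colfn β γ j
      else if W2 g then sw β γ (c g) else c g with hc'_def
  have hW2H : ∀ {g}, W2 g → g ∈ H := by
    rintro g ⟨k, h1, h2, rfl⟩
    exact (hpath k h1 (by omega)).1
  have hcW2 : ∀ g, W2 g → c' g = sw β γ (c g) := by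
    intro g hW
    have h1 : g ≠ e := fun hEq => he (hEq ▸ hW2H hW)
    have h2 : g ≠ t := fun hEq => ht (hEq ▸ hW2H hW)
    rw [hc'_def]
    simp only [if_neg h1, if_neg h2, if_pos hW]
  have hcNW2 : ∀ g, g ≠ e → g ≠ t → ¬ W2 g → c' g = c g := by
    intro g h1 h2 h3
    rw [hc'_def]
    simp only [if_neg h1, if_neg h2, if_neg h3]
  have hce : c' e = β := by rw [hc'_def]; simp
  have hct : c' t = colfn β γ j := by rw [hc'_def]; simp [hte]
  -- W2 characterization helpers
  have hnW2_edm : ¬ W2 (ed m) := by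
    rintro ⟨k, h1, h2, hk⟩
    have := edinj m k (by omega) (by omega) h1 (by omega) hk
    omega
  have hnW2_edj1 : ¬ W2 (ed (j+1)) := by
    rintro ⟨k, h1, h2, hk⟩
    have := edinj (j+1) k (by omega) (by omega) h1 (by omega) hk
    omega
  have hnW2_y : ∀ {h}, y ∈ G.ends h → ¬ W2 h := by
    rintro h hy ⟨k, h1, h2, rfl⟩
    exact hyedge k h1 (by omega) hy
  have hnW2_alpha : ∀ {h}, c h = α → ¬ W2 h := by
    rintro h hch ⟨k, h1, h2, rfl⟩
    have := (hpath k h1 (by omega)).2.2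
    rw [hch] at this
    exact colfn_ne_alpha hαβ hαγ k this.symm
  -- key lemmas
  have keyE : ∀ h, h ∈ H → h ≠ ed j → ∀ z : V, z ∈ G.ends h → z ∈ G.ends e →
      c' h ≠ β := by
    intro h hH hne z hzh hze
    have hh_ne_e : h ≠ e := fun hEq => he (hEq ▸ hH)
    have hh_ne_t : h ≠ t := fun hEq => ht (hEq ▸ hH)
    rw [hendse] at hze
    rcases Sym2.mem_iff.mp hze with rfl | rfl
    · rcases hu3 h hzh with hEq | rfl | hEq
      · exact absurd hEq hh_ne_e
      · -- h = ed 1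
        have hj2 : 2 ≤ j := by
          rcases Nat.lt_or_ge j 2 with h2 | h2
          · exfalso; apply hne; congr 1; omega
          · exact h2
        have hW : W2 (ed 1) := ⟨1, le_refl 1, by omega, rfl⟩
        rw [hcW2 _ hW, (hpath 1 (le_refl 1) (by omega)).2.2, sw_colfn, hcol2]
        exact hβγ.symm
      · have h1 : eu ≠ e := hEq ▸ hh_ne_e
        have h2 : eu ≠ t := hEq ▸ hh_ne_t
        rw [hEq, hcNW2 eu h1 h2 (hnW2_alpha heuc), heuc]
        exact hαβ
    · rcases hv3 h hzh with hEq | rfl | hEq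
      · exact absurd hEq hh_ne_e
      · rw [hcNW2 _ hh_ne_e hh_ne_t hnW2_edm, (hpath m (by omega) (le_refl m)).2.2, hcolm]
        exact hβγ.symm
      · have h1 : ev ≠ e := hEq ▸ hh_ne_e
        have h2 : ev ≠ t := hEq ▸ hh_ne_t
        rw [hEq, hcNW2 ev h1 h2 (hnW2_alpha hevc), hevc]
        exact hαβ
  have keyT : ∀ h, h ∈ H → h ≠ ed j → ∀ z : V, z ∈ G.ends h → z ∈ G.ends t →
      c' h ≠ colfn β γ j := by
    intro h hH hne z hzh hzt
    have hh_ne_e : h ≠ e := fun hEq => he (hEq ▸ hH)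
    have hh_ne_t : h ≠ t := fun hEq => ht (hEq ▸ hH)
    rw [hendst] at hzt
    rcases Sym2.mem_iff.mp hzt with rfl | rfl
    · rcases hxj3 h hzh with hEq | rfl | hEq
      · exact absurd hEq hne
      · rw [hcNW2 _ hh_ne_e hh_ne_t hnW2_edj1, hj1c]
        exact (colfn_succ_ne β γ hβγ j).symm
      · exact absurd hEq hh_ne_t
    · rw [hcNW2 h hh_ne_e hh_ne_t (hnW2_y hzh)]
      exact hδ h hH hzh
  have keyET : ∀ z : V, z ∈ G.ends e → z ∈ G.ends t → False := by
    intro z hze hzt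
    rw [hendse] at hze
    rw [hendst] at hzt
    rcases Sym2.mem_iff.mp hzt with rfl | rfl
    · rcases Sym2.mem_iff.mp hze with h | h
      · have := hinj j 0 (by omega) (by omega) h; omega
      · have := hinj j m (by omega) (by omega) h; omega
    · rcases Sym2.mem_iff.mp hze with h | h
      · exact hynot 0 (by omega) h
      · exact hynot m (le_refl m) h
  have keyB2 : ∀ g, g ∈ H → g ≠ ed j → ∀ h, h ∈ H → h ≠ ed j → W2 g → ¬ W2 h →
      ∀ z : V, z ∈ G.ends g → z ∈ G.ends h → c' g ≠ c' h := by
    intro g hgH hgne h hhH hhne hWg hWh z hzg hzh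
    have hh_ne_e : h ≠ e := fun hEq => he (hEq ▸ hhH)
    have hh_ne_t : h ≠ t := fun hEq => ht (hEq ▸ hhH)
    obtain ⟨k, hk1, hkj, rfl⟩ := hWg
    obtain ⟨_, hke, hkc⟩ := hpath k hk1 (by omega)
    rw [hcW2 _ ⟨k, hk1, hkj, rfl⟩, hcNW2 h hh_ne_e hh_ne_t hWh]
    have hzwalk : ∃ i, i ≤ j - 1 ∧ z = x i := by
      rw [hke] at hzg
      rcases Sym2.mem_iff.mp hzg with h0 | h0
      · exact ⟨k-1, by omega, h0⟩
      · exact ⟨k, by omega, h0⟩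
    obtain ⟨i, hij, rfl⟩ := hzwalk
    have hch : ¬ (c h = β ∨ c h = γ) := by
      intro hbc2
      rcases KL i (by omega) h hhH hzh hbc2 with ⟨h1, h2⟩ | ⟨h1, h2⟩
      · exact hWh ⟨i, h1, by omega, h2⟩
      · rcases Nat.lt_or_ge (i+1) j with hlt | hge
        · exact hWh ⟨i+1, by omega, by omega, h2⟩
        · -- i + 1 = j, so h = ed j
          have : i + 1 = j := by omega
          exact hhne (by rw [h2, this])
    have hchα : c h = α :=
      fin3_eq_of_ne hαβ hαγ hβγ (fun hh => hch (Or.inl hh)) (fun hh => hch (Or.inr hh))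
    rw [hkc, hchα]
    exact sw_ne_alpha hαβ hαγ (colfn_cases β γ k)
  -- properness
  set S : Set E := insert e (insert t (H \ {ed j})) with hS_def
  have hproper : G.IsProperColoring S c' := by
    intro g hg h hh hgh hadj
    obtain ⟨z, hzg, hzh⟩ := hadj
    simp only [hS_def, Set.mem_insert_iff, Set.mem_diff, Set.mem_singleton_iff] at hg hh
    rcases hg with rfl | rfl | ⟨hgH, hgne⟩
    · rcases hh with rfl | rfl | ⟨hhH, hhne⟩
      · exact absurd rfl hgh
      · exact absurd (keyET z hzg hzh) not_false
      · rw [hce]; exact fun hEq => keyE h hhH hhne z hzh hzg hEq.symm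
    · rcases hh with rfl | rfl | ⟨hhH, hhne⟩
      · exact absurd (keyET z hzh hzg) not_false
      · exact absurd rfl hgh
      · rw [hct]; exact fun hEq => keyT h hhH hhne z hzh hzg hEq.symm
    · rcases hh with rfl | rfl | ⟨hhH, hhne⟩
      · rw [hce]; exact keyE g hgH hgne z hzg hzh
      · rw [hct]; exact keyT g hgH hgne z hzg hzh
      · by_cases hWg : W2 g <;> by_cases hWh : W2 h
        · rw [hcW2 g hWg, hcW2 h hWh]
          exact fun hEq => hc g hgH h hhH hgh ⟨z, hzg, hzh⟩ (sw_inj hEq)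
        · exact keyB2 g hgH hgne h hhH hhne hWg hWh z hzg hzh
        · exact fun hEq => keyB2 h hhH hhne g hgH hgne hWh hWg z hzh hzg hEq.symm
        · have h1 : g ≠ e := fun hEq => he (hEq ▸ hgH)
          have h2 : g ≠ t := fun hEq => ht (hEq ▸ hgH)
          have h3 : h ≠ e := fun hEq => he (hEq ▸ hhH)
          have h4 : h ≠ t := fun hEq => ht (hEq ▸ hhH)
          rw [hcNW2 g h1 h2 hWg, hcNW2 h h3 h4 hWh]
          exact hc g hgH h hhH hgh ⟨z, hzg, hzh⟩
  -- cardinality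
  have hle := hmax S ⟨c', hproper⟩
  have h1 : (H \ {ed j}).ncard = H.ncard - 1 := Set.ncard_diff_singleton_of_mem hjH
  have htni : t ∉ H \ {ed j} := fun hmem => ht hmem.1
  have heni : e ∉ insert t (H \ {ed j}) := by
    intro hmem
    rcases hmem with hmem | hmem
    · exact hte hmem.symm
    · exact he hmem.1
  have h2 : S.ncard = H.ncard + 1 := by
    rw [hS_def, Set.ncard_insert_of_notMem heni, Set.ncard_insert_of_notMem htni, h1]
    have : 0 < H.ncard := (Set.ncard_pos (Set.toFinite H)).mpr ⟨ed j, hjH⟩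
    omega
  omega



lemma kempe2' {V E : Type} [Fintype E] (G : Multigraph V E) (H : Set E)
    (hmax : ∀ S : Set E, G.Colorable 3 S → S.ncard ≤ H.ncard)
    (c : E → Fin 3) (hc : G.IsProperColoring H c)
    (α β γ : Fin 3) (hαβ : α ≠ β) (hαγ : α ≠ γ) (hβγ : β ≠ γ)
    (e t eu ev : E) (he : e ∉ H) (ht : t ∉ H)
    (m : ℕ) (x : ℕ → V) (ed : ℕ → E) (hm2 : 2 ≤ m) (hmev : m % 2 = 0)
    (hpath : ∀ k, 1 ≤ k → k ≤ m →
      ed k ∈ H ∧ G.ends (ed k) = s(x (k-1), x k) ∧ c (ed k) = colfn β γ k)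
    (hstart : ∀ h ∈ H, x 0 ∈ G.ends h → c h ≠ colfn β γ 0)
    (hterm : ∀ g ∈ H, x m ∈ G.ends g → c g ≠ colfn β γ (m+1))
    (hinj : ∀ a b, a ≤ m → b ≤ m → x a = x b → a = b)
    (hendse : G.ends e = s(x 0, x m))
    (j : ℕ) (y : V) (hj1 : 1 ≤ j) (hjm : j < m)
    (hendst : G.ends t = s(x j, y))
    (hynot : ∀ l, l ≤ m → y ≠ x l)
    (hu3 : ∀ g, x 0 ∈ G.ends g → g = e ∨ g = ed 1 ∨ g = eu)
    (heuH : eu ∈ H) (heuc : c eu = α)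
    (hv3 : ∀ g, x m ∈ G.ends g → g = e ∨ g = ed m ∨ g = ev)
    (hevH : ev ∈ H) (hevc : c ev = α)
    (hxj3 : ∀ g, x j ∈ G.ends g → g = ed j ∨ g = ed (j+1) ∨ g = t)
    (hδ : ∀ h ∈ H, y ∈ G.ends h → c h ≠ colfn β γ (j+1)) : False := by
  have hcol0β : colfn γ β 0 = β := by unfold colfn; norm_num
  have hcolm1β : colfn β γ (m+1) = β := by
    unfold colfn; have h : (m+1) % 2 = 1 := by omega
    rw [h]; norm_num
  have hcolm1γ : colfn γ β (m+1) = γ := by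
    unfold colfn; have h : (m+1) % 2 = 1 := by omega
    rw [h]; norm_num
  have hcol0γ : colfn β γ 0 = γ := by unfold colfn; norm_num
  refine kempe2 G H hmax c hc α γ β hαγ hαβ hβγ.symm e t ev eu he ht m
    (fun k => x (m - k)) (fun k => ed (m + 1 - k)) hm2 hmev
    ?_ ?_ ?_ ?_ ?_ (m - j) y (by omega) (by omega) ?_ ?_ ?_ hevH hevc ?_ heuH heuc ?_ ?_
  · -- hpath
    intro k h1 h2
    obtain ⟨hH', hE', hC'⟩ := hpath (m+1-k) (by omega) (by omega)
    refine ⟨hH', ?_, ?_⟩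
    · show G.ends (ed (m+1-k)) = s(x (m - (k-1)), x (m-k))
      rw [hE']
      have e1 : m + 1 - k - 1 = m - k := by omega
      rw [e1]
      have e2 : m + 1 - k = m - (k-1) := by omega
      rw [e2, Sym2.eq_swap]
    · rw [hC']
      unfold colfn
      have h3 : (m+1-k) % 2 = (k+1) % 2 := by omega
      rw [h3]
      rcases Nat.mod_two_eq_zero_or_one k with h4 | h4
      · have h5 : (k+1) % 2 = 1 := by omega
        rw [h4, h5]; norm_num
      · have h5 : (k+1) % 2 = 0 := by omega
        rw [h4, h5]; norm_num
  · -- hstart (for reversed walk)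
    intro h hH hm0
    rw [hcol0β]
    have := hterm h hH hm0
    rwa [hcolm1β] at this
  · -- hterm (for reversed walk)
    intro g hg hgm
    have hgm' : x (m - m) ∈ G.ends g := hgm
    have e0 : m - m = 0 := by omega
    rw [e0] at hgm'
    show c g ≠ colfn γ β (m+1)
    rw [hcolm1γ]
    have := hstart g hg hgm'
    rwa [hcol0γ] at this
  · -- hinj
    intro a b ha hb hEq
    have := hinj (m-a) (m-b) (by omega) (by omega) hEq
    omega
  · -- hendse
    show G.ends e = s(x (m - 0), x (m - m))
    rw [hendse]
    have e0 : m - m = 0 := by omega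
    have e1 : m - 0 = m := by omega
    rw [e0, e1, Sym2.eq_swap]
  · -- hendst
    show G.ends t = s(x (m - (m - j)), y)
    have e1 : m - (m - j) = j := by omega
    rw [e1]
    exact hendst
  · -- hynot
    intro l hl
    exact hynot (m - l) (by omega)
  · -- hu3 (reversed) : at x (m - 0), edges e, ed (m+1-1), ev
    intro g hg
    have hg' : x (m - 0) ∈ G.ends g := hg
    show g = e ∨ g = ed (m + 1 - 1) ∨ g = ev
    have e1 : m + 1 - 1 = m := by omega
    rw [e1]
    have e2 : m - 0 = m := by omega
    rw [e2] at hg'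
    exact hv3 g hg' 
  · -- hv3 (reversed)
    intro g hg
    have hg' : x (m - m) ∈ G.ends g := hg
    show g = e ∨ g = ed (m + 1 - m) ∨ g = eu
    have e0 : m - m = 0 := by omega
    rw [e0] at hg'
    have e1 : m + 1 - m = 1 := by omega
    rw [e1]
    exact hu3 g hg' 
  · -- hxj3 (reversed)
    intro g hg
    have hg' : x (m - (m - j)) ∈ G.ends g := hg
    show g = ed (m + 1 - (m - j)) ∨ g = ed (m + 1 - (m - j + 1)) ∨ g = t
    have e0 : m - (m - j) = j := by omega
    rw [e0] at hg'
    have e1 : m + 1 - (m - j) = j + 1 := by omega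
    have e2 : m + 1 - (m - j + 1) = j := by omega
    rw [e1, e2]
    rcases hxj3 g hg' with h | h | h
    · exact Or.inr (Or.inl h)
    · exact Or.inl h
    · exact Or.inr (Or.inr h)
  · -- hδ (reversed)
    intro h hH hy
    have heq : colfn γ β (m - j) = colfn β γ (j+1) := by
      unfold colfn
      have h3 : (m - j) % 2 = j % 2 := by omega
      rw [h3]
      rcases Nat.mod_two_eq_zero_or_one j with h4 | h4
      · have h5 : (j+1) % 2 = 1 := by omega
        rw [h4, h5]; norm_num
      · have h5 : (j+1) % 2 = 0 := by omega
        rw [h4, h5]; norm_num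
    rw [heq]
    exact hδ h hH hy



lemma colfn_odd (β γ : Fin 3) {k : ℕ} (h : k % 2 = 1) : colfn β γ k = β := by
  unfold colfn; rw [h]; norm_num

lemma colfn_even (β γ : Fin 3) {k : ℕ} (h : k % 2 = 0) : colfn β γ k = γ := by
  unfold colfn; rw [h]; norm_num
end AltHelpers

/-- Let `H` be a maximum 3-edge-colorable subgraph of a cubic graph
`G`, properly colored by `c`, and let `e = (u,v)` be an edge of `G` not in `H`, with
`C(u) ∩ C(v) = {α}`, `C(u) = {α, β}` and `C(v) = {α, γ}`.  Then there is an odd cycle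
`C_e` through `e` (given by cyclically indexed distinct vertices `w i` and distinct
edges `f i`, `i ∈ ZMod n`, with `f i` joining `w i` to `w (i+1)`, `f 0 = e`, `w 0 = u`,
`w 1 = v`) such that every edge of the cycle other than `e` lies in `H` and the colors
alternate between `γ` and `β` along the cycle, while every edge of `G` incident to a
vertex of the cycle but not lying on the cycle belongs to `H` and is colored `α`. -/
theorem exists_alternating_odd_cycle_through_uncolored_edge
    {V E : Type} [Fintype V] [Fintype E] (G : Multigraph V E) (hG : G.IsCubic)
    (H : Set E) (hH : G.IsMaxColorable 3 H)
    (c : E → Fin 3) (hc : G.IsProperColoring H c)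
    (e : E) (he : e ∉ H) (u v : V) (hends : G.ends e = s(u, v))
    (α β γ : Fin 3) (hαβ : α ≠ β) (hαγ : α ≠ γ) (hβγ : β ≠ γ)
    (hCuv : G.colorsAt H c u ∩ G.colorsAt H c v = {α})
    (hCu : G.colorsAt H c u = {α, β}) (hCv : G.colorsAt H c v = {α, γ}) :
    ∃ (n : ℕ), Odd n ∧ 3 ≤ n ∧
      ∃ (w : ZMod n → V) (f : ZMod n → E),
        Function.Injective w ∧ Function.Injective f ∧
        f 0 = e ∧ w 0 = u ∧ w 1 = v ∧
        (∀ i : ZMod n, G.ends (f i) = s(w i, w (i + 1))) ∧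
        (∀ i : ZMod n, i ≠ 0 →
          f i ∈ H ∧ c (f i) = if i.val % 2 = 1 then γ else β) ∧
        (∀ g : E, (∀ i : ZMod n, g ≠ f i) → (∃ i : ZMod n, w i ∈ G.ends g) →
          g ∈ H ∧ c g = α) := by
  classical
  obtain ⟨-, hmax⟩ := hH
  have huv : u ≠ v := by
    have h := G.no_loops e
    rw [hends] at h
    simpa using h
  have hcol0 : colfn β γ 0 = γ := colfn_even β γ rfl
  have hcol1 : colfn β γ 1 = β := colfn_odd β γ rfl
  have hβu : ∃ f ∈ H, u ∈ G.ends f ∧ c f = β := by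
    have hmem : β ∈ G.colorsAt H c u := by rw [hCu]; exact Set.mem_insert_iff.mpr (Or.inr rfl)
    exact hmem
  have hαu : ∃ f ∈ H, u ∈ G.ends f ∧ c f = α := by
    have hmem : α ∈ G.colorsAt H c u := by rw [hCu]; exact Set.mem_insert _ _
    exact hmem
  have hαv : ∃ f ∈ H, v ∈ G.ends f ∧ c f = α := by
    have hmem : α ∈ G.colorsAt H c v := by rw [hCv]; exact Set.mem_insert _ _
    exact hmem
  have hγu : ∀ h ∈ H, u ∈ G.ends h → c h ≠ γ := by
    intro h hh hu2 hcg
    have hmem : γ ∈ G.colorsAt H c u := ⟨h, hh, hu2, hcg⟩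
    rw [hCu] at hmem
    simp only [Set.mem_insert_iff, Set.mem_singleton_iff] at hmem
    rcases hmem with h1 | h1
    · exact hαγ h1.symm
    · exact hβγ h1.symm
  have hβv : ∀ h ∈ H, v ∈ G.ends h → c h ≠ β := by
    intro h hh hv2 hcg
    have hmem : β ∈ G.colorsAt H c v := ⟨h, hh, hv2, hcg⟩
    rw [hCv] at hmem
    simp only [Set.mem_insert_iff, Set.mem_singleton_iff] at hmem
    rcases hmem with h1 | h1
    · exact hαβ h1.symm
    · exact hβγ h1
  -- the set of alternating-path lengths
  set T : Set ℕ := {n | ∃ xx : ℕ → V, ∃ dd : ℕ → E, xx 0 = u ∧ ∀ k, 1 ≤ k → k ≤ n →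
    dd k ∈ H ∧ G.ends (dd k) = s(xx (k-1), xx k) ∧ c (dd k) = colfn β γ k} with hT_def
  have h1T : 1 ∈ T := by
    obtain ⟨b, hbH, hbu, hbc⟩ := hβu
    obtain ⟨y1, hy1⟩ := Sym2.mem_iff_exists.mp hbu
    rw [hT_def]
    refine ⟨fun k => if k = 0 then u else y1, fun _ => b, by simp, ?_⟩
    intro k hk1 hk2
    have hk : k = 1 := by omega
    subst hk
    refine ⟨hbH, ?_, by rw [hcol1]; exact hbc⟩
    show G.ends b = s(u, y1)
    exact hy1
  have hbdd : BddAbove T := by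
    refine ⟨Fintype.card V, fun n hn => ?_⟩
    obtain ⟨xx, dd, hx0, hp⟩ := hn
    have hstart' : ∀ h ∈ H, xx 0 ∈ G.ends h → c h ≠ colfn β γ 0 := by
      intro h hh hu2 hcg
      rw [hcol0] at hcg
      exact hγu h hh (by rwa [hx0] at hu2) hcg
    have hinj0 := walk_inj G H c β γ hβγ hc n xx dd hp hstart'
    have hinjF : Function.Injective (fun i : Fin (n+1) => xx i.val) := by
      intro i j hEq
      have hEq' : xx i.val = xx j.val := hEq
      have hi := i.isLt
      have hj := j.isLt
      rcases lt_trichotomy i.val j.val with hlt | hEq2 | hlt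
      · exact absurd hEq' (hinj0 j.val (by omega) i.val hlt)
      · exact Fin.ext hEq2
      · exact absurd hEq'.symm (hinj0 i.val (by omega) j.val hlt)
    have hcard := Fintype.card_le_of_injective _ hinjF
    simp only [Fintype.card_fin] at hcard
    omega
  set m := sSup T with hm_def
  have hmT : m ∈ T := Nat.sSup_mem ⟨1, h1T⟩ hbdd
  obtain ⟨x, ed, hx0, hpath⟩ := hmT
  have hm1 : 1 ≤ m := le_csSup hbdd h1T
  have hstart : ∀ h ∈ H, x 0 ∈ G.ends h → c h ≠ colfn β γ 0 := by
    intro h hh hu2 hcg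
    rw [hcol0] at hcg
    exact hγu h hh (by rwa [hx0] at hu2) hcg
  have hinj0 := walk_inj G H c β γ hβγ hc m x ed hpath hstart
  have hinj : ∀ a b, a ≤ m → b ≤ m → x a = x b → a = b := by
    intro a b ha hb hEq
    rcases lt_trichotomy a b with h | h | h
    · exact absurd hEq (hinj0 b hb a h)
    · exact h
    · exact absurd hEq.symm (hinj0 a ha b h)
  have hterm : ∀ g ∈ H, x m ∈ G.ends g → c g ≠ colfn β γ (m+1) := by
    intro g hgH hgm hgc
    obtain ⟨y1, hy1⟩ := Sym2.mem_iff_exists.mp hgm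
    have hT2 : m + 1 ∈ T := by
      rw [hT_def]
      refine ⟨fun k => if k = m+1 then y1 else x k, fun k => if k = m+1 then g else ed k,
        by beta_reduce; rw [if_neg (by omega : ¬ (0:ℕ) = m + 1)]; exact hx0, ?_⟩
      intro k hk1 hk2
      beta_reduce
      by_cases hk : k = m + 1
      · subst hk
        rw [if_pos rfl]
        refine ⟨hgH, ?_, hgc⟩
        have e1 : (if m + 1 - 1 = m + 1 then y1 else x (m+1-1)) = x m := by
          rw [if_neg (by omega : ¬ m + 1 - 1 = m + 1)]
          exact congrArg x (by omega)
        have e2 : (if m + 1 = m + 1 then y1 else x (m+1)) = y1 := if_pos rfl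
        show G.ends g = s(if m + 1 - 1 = m + 1 then y1 else x (m+1-1),
          if m + 1 = m + 1 then y1 else x (m+1))
        rw [e1, e2]
        exact hy1
      · have hk2' : k ≤ m := by omega
        obtain ⟨hH', hE', hC'⟩ := hpath k hk1 hk2'
        rw [if_neg hk]
        refine ⟨hH', ?_, hC'⟩
        have e1 : (if k - 1 = m + 1 then y1 else x (k-1)) = x (k-1) := if_neg (by omega)
        have e2 : (if k = m + 1 then y1 else x k) = x k := if_neg hk
        show G.ends (ed k) = s(if k - 1 = m + 1 then y1 else x (k-1),
          if k = m + 1 then y1 else x k)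
        rw [e1, e2]
        exact hE'
    have := le_csSup hbdd hT2
    omega
  have hendse : G.ends e = s(x 0, v) := by rw [hends, hx0]
  have hxmv : x m = v := by
    by_contra hne
    exact kempe1 G H hmax c hc β γ hβγ e he v m x ed hpath hstart hterm hinj hendse hβv hm1
      (by rw [hx0]; exact huv) hne
  obtain ⟨hmH, hmE, hmC⟩ := hpath m hm1 (le_refl m)
  have hvm_mem : v ∈ G.ends (ed m) := by
    rw [hmE, ← hxmv]
    exact Sym2.mem_mk_right _ _
  have hmcne : c (ed m) ≠ β := hβv (ed m) hmH hvm_mem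
  have hmev : m % 2 = 0 := by
    rcases Nat.mod_two_eq_zero_or_one m with h | h
    · exact h
    · exact absurd (by rw [hmC, colfn_odd β γ h]) hmcne
  have hm2 : 2 ≤ m := by omega
  have deg3 : ∀ w : V, {g : E | w ∈ G.ends g}.ncard = 3 := by
    intro w
    have h3 := hG w
    unfold Multigraph.degree Multigraph.degreeIn at h3
    rwa [Set.sep_univ] at h3
  have edges_at : ∀ (w : V) (a b d : E), a ≠ b → a ≠ d → b ≠ d →
      w ∈ G.ends a → w ∈ G.ends b → w ∈ G.ends d →
      ∀ g, w ∈ G.ends g → g = a ∨ g = b ∨ g = d := by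
    intro w a b d hab had hbd ha hb hd g hg
    by_contra hcon
    push_neg at hcon
    obtain ⟨h1, h2, h3⟩ := hcon
    have hsub : ({g, a, b, d} : Set E) ⊆ {g' : E | w ∈ G.ends g'} := by
      intro z hz
      simp only [Set.mem_insert_iff, Set.mem_singleton_iff] at hz
      rcases hz with rfl | rfl | rfl | rfl <;> assumption
    have hc4 : ({g, a, b, d} : Set E).ncard = 4 := by
      rw [Set.ncard_insert_of_notMem (by simp [h1, h2, h3]),
          Set.ncard_insert_of_notMem (by simp [hab, had]),
          Set.ncard_insert_of_notMem (by simp [hbd]), Set.ncard_singleton]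
    have hle := Set.ncard_le_ncard hsub (Set.toFinite _)
    rw [hc4, deg3 w] at hle
    omega
  obtain ⟨eu, heuH, heuu, heuc⟩ := hαu
  obtain ⟨ev, hevH, hevv, hevc⟩ := hαv
  obtain ⟨hed1H, hed1E, hed1C⟩ := hpath 1 (le_refl 1) hm1
  have hue : u ∈ G.ends e := by rw [hends]; exact Sym2.mem_mk_left _ _
  have hve : v ∈ G.ends e := by rw [hends]; exact Sym2.mem_mk_right _ _
  have hu_ed1 : u ∈ G.ends (ed 1) := by
    show u ∈ G.ends (ed 1)
    rw [hed1E, ← hx0]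
    show x 0 ∈ s(x 0, x 1)
    exact Sym2.mem_mk_left _ _
  have he_ne_ed : ∀ k, 1 ≤ k → k ≤ m → e ≠ ed k :=
    fun k h1 h2 hEq => absurd ((hpath k h1 h2).1) (hEq ▸ he)
  have hed1_ne_eu : ed 1 ≠ eu := by
    intro hEq
    have h1 := hed1C
    rw [hEq, heuc, hcol1] at h1
    exact hαβ h1
  have hedm_ne_ev : ed m ≠ ev := by
    intro hEq
    have h1 := hmC
    rw [hEq, hevc, colfn_even β γ hmev] at h1
    exact hαγ h1
  have hu3 := edges_at u e (ed 1) eu (he_ne_ed 1 (le_refl 1) hm1)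
    (fun hEq => he (hEq ▸ heuH)) hed1_ne_eu hue hu_ed1 heuu
  have hv3 := edges_at v e (ed m) ev (he_ne_ed m hm1 (le_refl m))
    (fun hEq => he (hEq ▸ hevH)) hedm_ne_ev hve hvm_mem hevv
  have hu3x : ∀ g, x 0 ∈ G.ends g → g = e ∨ g = ed 1 ∨ g = eu := by
    intro g hg
    exact hu3 g (by rwa [hx0] at hg)
  have hv3x : ∀ g, x m ∈ G.ends g → g = e ∨ g = ed m ∨ g = ev := by
    intro g hg
    exact hv3 g (by rwa [hxmv] at hg)
  have hendse2 : G.ends e = s(x 0, x m) := by rw [hends, hx0, hxmv]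
  have hed_ne_succ : ∀ k, 1 ≤ k → k + 1 ≤ m → ed k ≠ ed (k+1) := by
    intro k h1 h2 hEq
    have h3 := colfn_succ_ne β γ hβγ k
    rw [← (hpath k h1 (by omega)).2.2, ← (hpath (k+1) (by omega) h2).2.2, hEq] at h3
    exact h3 rfl
  have hthird : ∀ jj, 1 ≤ jj → jj < m → ∀ t, x jj ∈ G.ends t → t ≠ ed jj → t ≠ ed (jj+1) →
      t ∈ H ∧ c t = α := by
    intro jj hj1 hjm t hxt htne1 htne2
    obtain ⟨hjH, hjE, hjC⟩ := hpath jj hj1 (le_of_lt hjm)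
    obtain ⟨hj1H, hj1E, hj1C⟩ := hpath (jj+1) (by omega) (by omega)
    have ej : jj + 1 - 1 = jj := by omega
    rw [ej] at hj1E
    have hxj_mem1 : x jj ∈ G.ends (ed jj) := by rw [hjE]; exact Sym2.mem_mk_right _ _
    have hxj_mem2 : x jj ∈ G.ends (ed (jj+1)) := by rw [hj1E]; exact Sym2.mem_mk_left _ _
    by_cases htH : t ∈ H
    · refine ⟨htH, ?_⟩
      have hne1 : c t ≠ colfn β γ jj := by
        intro hEq
        exact hc t htH (ed jj) hjH htne1 ⟨x jj, hxt, hxj_mem1⟩ (hEq.trans hjC.symm)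
      have hne2 : c t ≠ colfn β γ (jj+1) := by
        intro hEq
        exact hc t htH (ed (jj+1)) hj1H htne2 ⟨x jj, hxt, hxj_mem2⟩ (hEq.trans hj1C.symm)
      rcases colfn_pair β γ jj with ⟨h1, h2⟩ | ⟨h1, h2⟩
      · exact fin3_eq_of_ne hαβ hαγ hβγ (h1 ▸ hne1) (h2 ▸ hne2)
      · exact fin3_eq_of_ne hαβ hαγ hβγ (h2 ▸ hne2) (h1 ▸ hne1)
    · exfalso
      obtain ⟨y, hy⟩ := Sym2.mem_iff_exists.mp hxt
      have hedne : ed jj ≠ ed (jj+1) := hed_ne_succ jj hj1 (by omega)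
      have hxj3 := edges_at (x jj) (ed jj) (ed (jj+1)) t hedne
        (fun hEq => htne1 hEq.symm) (fun hEq => htne2 hEq.symm) hxj_mem1 hxj_mem2 hxt
      have hy_mem : y ∈ G.ends t := by rw [hy]; exact Sym2.mem_mk_right _ _
      have hyα : ∃ hh ∈ H, y ∈ G.ends hh ∧ c hh = α := by
        by_contra hcon
        push_neg at hcon
        set c2 : E → Fin 3 := fun g => if g = t then α else c g with hc2_def
        have hc2t : c2 t = α := by rw [hc2_def]; simp
        have hc2o : ∀ g, g ≠ t → c2 g = c g := by
          intro g hg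
          rw [hc2_def]
          simp [hg]
        have keyt : ∀ hh ∈ H, ∀ z : V, z ∈ G.ends hh → z ∈ G.ends t → c2 hh ≠ α := by
          intro hh hhH z hzh hzt
          have hh_ne_t : hh ≠ t := fun hEq => htH (hEq ▸ hhH)
          rw [hc2o hh hh_ne_t]
          rw [hy] at hzt
          rcases Sym2.mem_iff.mp hzt with rfl | rfl
          · rcases hxj3 hh hzh with hEq | hEq | hEq
            · rw [hEq, hjC]; exact colfn_ne_alpha hαβ hαγ jj
            · rw [hEq, hj1C]; exact colfn_ne_alpha hαβ hαγ (jj+1)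
            · exact absurd hEq hh_ne_t
          · exact hcon hh hhH hzh
        have hproper2 : G.IsProperColoring (insert t H) c2 := by
          intro g hg h hh hgh hadj
          obtain ⟨z, hzg, hzh⟩ := hadj
          rcases hg with rfl | hgH2
          · rcases hh with rfl | hhH2
            · exact absurd rfl hgh
            · rw [hc2t]; exact fun hEq => keyt h hhH2 z hzh hzg hEq.symm
          · rcases hh with rfl | hhH2
            · rw [hc2t]; exact keyt g hgH2 z hzg hzh
            · have g_ne : g ≠ t := fun hEq => htH (hEq ▸ hgH2)
              have h_ne : h ≠ t := fun hEq => htH (hEq ▸ hhH2)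
              rw [hc2o g g_ne, hc2o h h_ne]
              exact hc g hgH2 h hhH2 hgh ⟨z, hzg, hzh⟩
        have hle := hmax _ ⟨c2, hproper2⟩
        rw [Set.ncard_insert_of_notMem htH] at hle
        omega
      obtain ⟨hy', hyH', hyy', hyc'⟩ := hyα
      have hynot : ∀ l, l ≤ m → y ≠ x l := by
        intro l hl hEq
        rcases Nat.eq_zero_or_pos l with rfl | hl1
        · have hut : x 0 ∈ G.ends t := by rw [← hEq]; exact hy_mem
          rcases hu3x t hut with hEq2 | hEq2 | hEq2
          · have h0 : x jj ∈ G.ends e := hEq2 ▸ hxt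
            rw [hendse2] at h0
            rcases Sym2.mem_iff.mp h0 with h0' | h0'
            · have := hinj jj 0 (by omega) (by omega) h0'; omega
            · have := hinj jj m (by omega) (le_refl m) h0'; omega
          · exact htH (hEq2 ▸ hed1H)
          · exact htH (hEq2 ▸ heuH)
        · rcases eq_or_lt_of_le hl with rfl | hlm
          · have hvt : x m ∈ G.ends t := by rw [← hEq]; exact hy_mem
            rcases hv3x t hvt with hEq2 | hEq2 | hEq2
            · have h0 : x jj ∈ G.ends e := hEq2 ▸ hxt
              rw [hendse2] at h0
              rcases Sym2.mem_iff.mp h0 with h0' | h0'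
              · have := hinj jj 0 (by omega) (by omega) h0'; omega
              · have := hinj jj m (by omega) (le_refl m) h0'; omega
            · exact htH (hEq2 ▸ hmH)
            · exact htH (hEq2 ▸ hevH)
          · have hxt_l : x l ∈ G.ends t := by rw [← hEq]; exact hy_mem
            obtain ⟨hlH, hlE, hlC⟩ := hpath l hl1 (le_of_lt hlm)
            obtain ⟨hl1H, hl1E, hl1C⟩ := hpath (l+1) (by omega) (by omega)
            have el : l + 1 - 1 = l := by omega
            rw [el] at hl1E
            have hlm1 : x l ∈ G.ends (ed l) := by rw [hlE]; exact Sym2.mem_mk_right _ _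
            have hlm2 : x l ∈ G.ends (ed (l+1)) := by rw [hl1E]; exact Sym2.mem_mk_left _ _
            have hedne_l : ed l ≠ ed (l+1) := hed_ne_succ l hl1 (by omega)
            have hxl3 := edges_at (x l) (ed l) (ed (l+1)) t hedne_l
              (fun hEq2 => htH (hEq2 ▸ hlH)) (fun hEq2 => htH (hEq2 ▸ hl1H)) hlm1 hlm2 hxt_l
            have hyyl : x l ∈ G.ends hy' := by rw [← hEq]; exact hyy'
            rcases hxl3 hy' hyyl with hEq2 | hEq2 | hEq2
            · have h0 := hyc'
              rw [hEq2, hlC] at h0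
              exact colfn_ne_alpha hαβ hαγ l h0
            · have h0 := hyc'
              rw [hEq2, hl1C] at h0
              exact colfn_ne_alpha hαβ hαγ (l+1) h0
            · exact htH (hEq2 ▸ hyH')
      have hδ0 : (∀ hh ∈ H, y ∈ G.ends hh → c hh ≠ β) ∨
          (∀ hh ∈ H, y ∈ G.ends hh → c hh ≠ γ) := by
        by_contra hcon
        push_neg at hcon
        obtain ⟨⟨hb, hbH, hby, hbc2⟩, ⟨hg2, hg2H, hg2y, hg2c⟩⟩ := hcon
        have h12 : hy' ≠ hb := fun hEq => hαβ (by rw [← hyc', hEq, hbc2])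
        have h13 : hy' ≠ hg2 := fun hEq => hαγ (by rw [← hyc', hEq, hg2c])
        have h23 : hb ≠ hg2 := fun hEq => hβγ (by rw [← hbc2, hEq, hg2c])
        rcases edges_at y hy' hb hg2 h12 h13 h23 hyy' hby hg2y t hy_mem with hEq | hEq | hEq
        · exact htH (hEq ▸ hyH')
        · exact htH (hEq ▸ hbH)
        · exact htH (hEq ▸ hg2H)
      have hsplit : (∀ hh ∈ H, y ∈ G.ends hh → c hh ≠ colfn β γ jj) ∨
          (∀ hh ∈ H, y ∈ G.ends hh → c hh ≠ colfn β γ (jj+1)) := by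
        rcases colfn_pair β γ jj with ⟨h1, h2⟩ | ⟨h1, h2⟩
        · rcases hδ0 with hA | hA
          · exact Or.inl (by rw [h1]; exact hA)
          · exact Or.inr (by rw [h2]; exact hA)
        · rcases hδ0 with hA | hA
          · exact Or.inr (by rw [h2]; exact hA)
          · exact Or.inl (by rw [h1]; exact hA)
      rcases hsplit with hA | hA
      · exact kempe2 G H hmax c hc α β γ hαβ hαγ hβγ e t eu ev he htH m x ed hm2 hmev
          hpath hstart hterm hinj hendse2 jj y hj1 hjm hy hynot hu3x heuH heuc hv3x hevH hevc
          hxj3 hA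
      · exact kempe2' G H hmax c hc α β γ hαβ hαγ hβγ e t eu ev he htH m x ed hm2 hmev
          hpath hstart hterm hinj hendse2 jj y hj1 hjm hy hynot hu3x heuH heuc hv3x hevH hevc
          hxj3 hA
  -- assemble the cycle
  refine ⟨m + 1, Even.add_one (Nat.even_iff.mpr hmev), by omega, ?_⟩
  haveI : NeZero (m+1) := ⟨by omega⟩
  have hval_lt : ∀ i : ZMod (m+1), i.val < m + 1 := fun i => ZMod.val_lt i
  have hval_inj : ∀ i j : ZMod (m+1), i.val = j.val → i = j :=
    fun i j h => ZMod.val_injective (m+1) h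
  have hval0 : (0 : ZMod (m+1)).val = 0 := ZMod.val_zero
  have hval1 : (1 : ZMod (m+1)).val = 1 := ZMod.val_one'' (by omega)
  have hvalcast : ∀ a : ℕ, a < m + 1 → ((a : ZMod (m+1))).val = a := by
    intro a ha
    rw [ZMod.val_natCast]
    exact Nat.mod_eq_of_lt ha
  have hval_succ : ∀ i : ZMod (m+1), (i + 1).val = (i.val + 1) % (m+1) := by
    intro i
    rw [ZMod.val_add, hval1]
  set idx : ZMod (m+1) → ℕ := fun i => if i.val = 0 then 0 else m + 1 - i.val with hidx_def
  have hidx_le : ∀ i, idx i ≤ m := by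
    intro i
    by_cases h : i.val = 0
    · simp only [hidx_def]
      rw [if_pos h]
      omega
    · have := hval_lt i
      simp only [hidx_def]
      rw [if_neg h]
      omega
  have hidx0 : idx 0 = 0 := by simp [hidx_def, hval0]
  have hidx1 : idx 1 = m := by
    simp only [hidx_def, hval1]
    norm_num
  refine ⟨fun i => x (idx i), fun i => if i.val = 0 then e else ed (m + 1 - i.val),
    ?_, ?_, ?_, ?_, ?_, ?_, ?_, ?_⟩
  · -- w injective
    intro i j hEq
    have hEq' : x (idx i) = x (idx j) := hEq
    apply hval_inj
    have hij := hinj (idx i) (idx j) (hidx_le i) (hidx_le j) hEq'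
    have hi := hval_lt i
    have hj := hval_lt j
    simp only [hidx_def] at hij
    by_cases h1 : i.val = 0 <;> by_cases h2 : j.val = 0
    · rw [h1, h2]
    · rw [if_pos h1, if_neg h2] at hij; omega
    · rw [if_neg h1, if_pos h2] at hij; omega
    · rw [if_neg h1, if_neg h2] at hij; omega
  · -- f injective
    intro i j hEq
    have hEq' : (if i.val = 0 then e else ed (m + 1 - i.val)) =
      (if j.val = 0 then e else ed (m + 1 - j.val)) := hEq
    apply hval_inj
    have hi := hval_lt i
    have hj := hval_lt j
    by_cases h1 : i.val = 0 <;> by_cases h2 : j.val = 0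
    · rw [h1, h2]
    · exfalso
      rw [if_pos h1, if_neg h2] at hEq'
      exact he (hEq' ▸ (hpath (m+1-j.val) (by omega) (by omega)).1)
    · exfalso
      rw [if_neg h1, if_pos h2] at hEq'
      exact he (hEq'.symm ▸ (hpath (m+1-i.val) (by omega) (by omega)).1)
    · rw [if_neg h1, if_neg h2] at hEq'
      have := walk_ed_inj G H c β γ m x ed hpath hinj (m+1-i.val) (m+1-j.val)
        (by omega) (by omega) (by omega) (by omega) hEq'
      omega
  · -- f 0 = e
    show (if (0 : ZMod (m+1)).val = 0 then e else ed (m + 1 - (0 : ZMod (m+1)).val)) = e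
    rw [if_pos hval0]
  · -- w 0 = u
    show x (idx 0) = u
    rw [hidx0]
    exact hx0
  · -- w 1 = v
    show x (idx 1) = v
    rw [hidx1]
    exact hxmv
  · -- ends
    intro i
    show G.ends (if i.val = 0 then e else ed (m + 1 - i.val)) = s(x (idx i), x (idx (i+1)))
    by_cases h1 : i.val = 0
    · rw [if_pos h1]
      have hi0 : i = 0 := hval_inj i 0 (by rw [h1, hval0])
      subst hi0
      rw [zero_add, hidx0, hidx1]
      exact hendse2
    · rw [if_neg h1]
      have hiv := hval_lt i
      have hidxi : idx i = m + 1 - i.val := by simp only [hidx_def, if_neg h1]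
      by_cases h2 : i.val = m
      · have hsucc : (i+1).val = 0 := by rw [hval_succ, h2]; exact Nat.mod_self _
        have h3 : idx (i+1) = 0 := by simp only [hidx_def, if_pos hsucc]
        rw [h3, hidxi, h2]
        have e1 : m + 1 - m = 1 := by omega
        rw [e1, hed1E]
        show s(x 0, x 1) = s(x 1, x 0)
        exact Sym2.eq_swap
      · have hsucc : (i+1).val = i.val + 1 := by
          rw [hval_succ]
          exact Nat.mod_eq_of_lt (by omega)
        have h3 : idx (i+1) = m - i.val := by
          simp only [hidx_def, if_neg (by rw [hsucc]; omega : ¬ (i+1).val = 0), hsucc]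
          omega
        rw [hidxi, h3]
        obtain ⟨_, hE', _⟩ := hpath (m+1-i.val) (by omega) (by omega)
        rw [hE']
        have e1 : m + 1 - i.val - 1 = m - i.val := by omega
        rw [e1]
        exact Sym2.eq_swap
  · -- colors
    intro i hi0
    have h1 : i.val ≠ 0 := fun h => hi0 (hval_inj i 0 (by rw [h, hval0]))
    show (if i.val = 0 then e else ed (m + 1 - i.val)) ∈ H ∧
      c (if i.val = 0 then e else ed (m + 1 - i.val)) = if i.val % 2 = 1 then γ else β
    rw [if_neg h1]
    have hiv := hval_lt i
    obtain ⟨hH', _, hC'⟩ := hpath (m+1-i.val) (by omega) (by omega)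
    refine ⟨hH', ?_⟩
    rw [hC']
    rcases Nat.mod_two_eq_zero_or_one i.val with h2 | h2
    · rw [if_neg (by omega)]
      exact colfn_odd β γ (by omega)
    · rw [if_pos h2]
      exact colfn_even β γ (by omega)
  · -- off-cycle edges
    intro g hgf hgw
    obtain ⟨i, hwi⟩ := hgw
    have hg_e : g ≠ e := by
      intro hEq
      apply hgf 0
      show g = if (0 : ZMod (m+1)).val = 0 then e else ed (m + 1 - (0 : ZMod (m+1)).val)
      rw [if_pos hval0]
      exact hEq
    have hg_ed : ∀ k, 1 ≤ k → k ≤ m → g ≠ ed k := by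
      intro k hk1 hk2 hEq
      apply hgf ((m+1-k : ℕ) : ZMod (m+1))
      have hvk : ((m+1-k : ℕ) : ZMod (m+1)).val = m+1-k := hvalcast _ (by omega)
      show g = if ((m+1-k : ℕ) : ZMod (m+1)).val = 0 then e
        else ed (m + 1 - ((m+1-k : ℕ) : ZMod (m+1)).val)
      rw [if_neg (by rw [hvk]; omega), hvk]
      have e1 : m + 1 - (m+1-k) = k := by omega
      rw [e1]
      exact hEq
    have hmem : x (idx i) ∈ G.ends g := hwi
    have hjjm : idx i ≤ m := hidx_le i
    rcases Nat.eq_zero_or_pos (idx i) with hjj0 | hjj1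
    · rw [hjj0] at hmem
      rcases hu3x g hmem with hEq | hEq | hEq
      · exact absurd hEq hg_e
      · exact absurd hEq (hg_ed 1 (le_refl 1) hm1)
      · rw [hEq]
        exact ⟨heuH, heuc⟩
    · rcases eq_or_lt_of_le hjjm with hjjm' | hjjm'
      · rw [hjjm'] at hmem
        rcases hv3x g hmem with hEq | hEq | hEq
        · exact absurd hEq hg_e
        · exact absurd hEq (hg_ed m hm1 (le_refl m))
        · rw [hEq]
          exact ⟨hevH, hevc⟩
      · exact hthird (idx i) hjj1 hjjm' g hmem (hg_ed (idx i) hjj1 (by omega))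
          (hg_ed (idx i + 1) (by omega) (by omega))
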